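/- Let a > 0 and let φ : [0,a] → ℝ be an increasing, concave, continuous function with φ(0) = 0 and φ(a) = 1. Let h : [0,a] → ℝ be measurable with |h(t)| ≤ 1 for a.e. t ∈ [0,a], and set E₊ := {t : h(t) > 0} and E₋ := {t : h(t) < 0}. Then ‖1 + h‖_{Λ(φ)} = 1 + ∫₀^{m(E₊)} (h·χ_{E₊})*(t) dφ(t) + ∫₀^{m(E₋)} (h·χ_{E₋})*(t) dφ(a−t), and ‖1 − h‖_{Λ(φ)} = 1 + ∫₀^{m(E₋)} (h·χ_{E₋})*(t) dφ(t) + ∫₀^{m(E₊)} (h·χ_{E₊})*(t) dφ(a−t), where ∫₀^b g(t) dφ(a−t) denotes the Lebesgue–Stieltjes integral of g with respect to the decreasing function t ↦ φ(a−t) (so this term is ≤ 0 when g ≥ 0). -/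

import Mathlib

open MeasureTheory Set Filter Topology
open scoped ENNReal NNReal Classical

noncomputable section

/-- The distribution function `m {s ∈ [0,a] : τ < ‖f s‖}` of `f` on `[0,a]`. -/
def distrib {E : Type*} [NormedAddCommGroup E] (a : ℝ) (f : ℝ → E) (τ : ℝ) : ℝ≥0∞ :=
  volume {s ∈ Set.Icc (0:ℝ) a | τ < ‖f s‖}

/-- The decreasing rearrangement `f*` of `f` on `[0,a]`:
`f*(t) = inf {τ ≥ 0 : m {s ∈ [0,a] : ‖f s‖ > τ} ≤ t}`. -/
def rearr {E : Type*} [NormedAddCommGroup E] (a : ℝ) (f : ℝ → E) (t : ℝ) : ℝ :=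
  sInf {τ : ℝ | 0 ≤ τ ∧ distrib a f τ ≤ ENNReal.ofReal t}

/-- The clamp of `t : ℝ` to the interval `[0,a]`. -/
def clampIcc (a t : ℝ) : ℝ := min (max t 0) a

lemma clampIcc_mem (a t : ℝ) (ha : 0 ≤ a) : clampIcc a t ∈ Set.Icc (0:ℝ) a :=
  ⟨le_min (le_max_right t 0) ha, min_le_right _ _⟩

lemma clampIcc_mono (a : ℝ) : Monotone (clampIcc a) := fun _ _ hst =>
  min_le_min (max_le_max hst le_rfl) le_rfl

lemma clampIcc_continuous (a : ℝ) : Continuous (clampIcc a) :=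
  (continuous_id.max continuous_const).min continuous_const

/-- The Stieltjes integrator associated with an increasing continuous function `φ` on `[0,a]`
(extended to all of `ℝ` as a constant outside `[0,a]`).  Its Lebesgue–Stieltjes measure
realizes the integrals `∫₀^a ⋯ dφ(t)`. -/
def stieltjesOfOn (φ : ℝ → ℝ) (a : ℝ) : StieltjesFunction ℝ :=
  if h : 0 ≤ a ∧ MonotoneOn φ (Set.Icc 0 a) ∧ ContinuousOn φ (Set.Icc 0 a) then
    { toFun := fun t => φ (clampIcc a t)
      mono' := fun s t hst =>
        h.2.1 (clampIcc_mem a s h.1) (clampIcc_mem a t h.1) (clampIcc_mono a hst)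
      right_continuous' := fun t =>
        ((h.2.2.comp_continuous (clampIcc_continuous a)
          (fun x => clampIcc_mem a x h.1)).continuousAt).continuousWithinAt }
  else StieltjesFunction.id

/-- The Lorentz space functional `‖f‖_{Λ(φ)} = ∫₀^a f*(t) dφ(t)` (with values in `ℝ≥0∞`). -/
def eLorentzNorm {E : Type*} [NormedAddCommGroup E] (φ : ℝ → ℝ) (a : ℝ) (f : ℝ → E) : ℝ≥0∞ :=
  ∫⁻ t in Set.Ioc (0:ℝ) a, ENNReal.ofReal (rearr a f t) ∂(stieltjesOfOn φ a).measure

/-- Membership in the Lorentz space `Λ(φ)[0,a]`. -/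
def MemLorentz {E : Type*} [NormedAddCommGroup E] [MeasurableSpace E]
    (φ : ℝ → ℝ) (a : ℝ) (f : ℝ → E) : Prop :=
  Measurable f ∧ eLorentzNorm φ a f < ⊤

/-- The Hardy–Lorentz space functional
`‖f‖_{H(Λ(φ))} = sup_{0 ≤ r < 1} ‖t ↦ f (r e^{it})‖_{Λ(φ)}` for functions on the unit disk. -/
def eHLNorm (φ : ℝ → ℝ) (f : ℂ → ℂ) : ℝ≥0∞ :=
  ⨆ r ∈ Set.Ico (0:ℝ) 1,
    eLorentzNorm φ (2 * Real.pi)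
      (fun t : ℝ => f (Complex.ofReal r * Complex.exp (Complex.I * Complex.ofReal t)))

/-- The classical `H¹` functional `‖f‖_{H¹} = sup_{0 ≤ r < 1} (1/(2π)) ∫₀^{2π} |f(r e^{it})| dt`. -/
def eH1Norm (f : ℂ → ℂ) : ℝ≥0∞ :=
  ⨆ r ∈ Set.Ico (0:ℝ) 1,
    (ENNReal.ofReal (2 * Real.pi))⁻¹ *
      ∫⁻ t in Set.Ioc (0:ℝ) (2 * Real.pi),
        ENNReal.ofReal ‖f (Complex.ofReal r * Complex.exp (Complex.I * Complex.ofReal t))‖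

/-- `fb` is the boundary (radial limit) function of `f`: for a.e. `t ∈ [0,2π]`,
`f(r e^{it}) → fb t` as `r → 1⁻`.  (For `f ∈ H¹` such a function exists and coincides a.e.
with the nontangential limit `f̃`.) -/
def HasRadialLimits (f : ℂ → ℂ) (fb : ℝ → ℂ) : Prop :=
  ∀ᵐ t ∂(volume.restrict (Set.Icc (0:ℝ) (2 * Real.pi))),
    Filter.Tendsto (fun r : ℝ => f (Complex.ofReal r * Complex.exp (Complex.I * Complex.ofReal t)))
      (nhdsWithin 1 (Set.Iio 1)) (nhds (fb t))

/-- `f` (with boundary function `fb`) is an outer function: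
`f` is non-null and `ln |f 0| = (1/(2π)) ∫₀^{2π} ln |fb s| ds`. -/
def IsOuter (f : ℂ → ℂ) (fb : ℝ → ℂ) : Prop :=
  (∃ z ∈ Metric.ball (0:ℂ) 1, f z ≠ 0) ∧
    Real.log ‖f 0‖ =
      (1 / (2 * Real.pi)) * ∫ s in Set.Ioc (0:ℝ) (2 * Real.pi), Real.log ‖fb s‖

/-- The set `E₊ = {t ∈ [0,a] : h t > 0}`. -/
def posSet (a : ℝ) (h : ℝ → ℝ) : Set ℝ := {t ∈ Set.Icc (0:ℝ) a | 0 < h t}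

/-- The set `E₋ = {t ∈ [0,a] : h t < 0}`. -/
def negSet (a : ℝ) (h : ℝ → ℝ) : Set ℝ := {t ∈ Set.Icc (0:ℝ) a | h t < 0}

/-!
By the layer-cake formula, `∫₀^b f* dφ = ∫₀^∞ φ(m{|f| > τ}) dτ`, and for the reflected
integrator `ψ(t) = -φ(a - t)` the integrand becomes `1 - φ(a - m{|f| > τ})`.
Since `-1 ≤ h ≤ 1`, the level sets of `1 + h` above height `1` are those of `h χ_{E₊}` shifted
by one, while for `0 < τ ≤ 1` and all but countably many `τ`,
`m{1 + h > τ} = a - m{|h χ_{E₋}| > 1 - τ}`. After the substitution `τ ↦ 1 - τ`, the part of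
`‖1 + h‖` coming from heights in `(0,1]` and the `E₋` term add up to `∫₀¹ 1 dτ = 1`.
The identity for `1 - h` is the one for `-h`.
-/

section Distrib

variable {E : Type*} [NormedAddCommGroup E] (a : ℝ) (f : ℝ → E)

lemma distrib_eq_restrict (τ : ℝ) :
    distrib a f τ = volume.restrict (Icc 0 a) {s | τ < ‖f s‖} := by
  rw [distrib, Measure.restrict_apply' measurableSet_Icc, inter_comm]
  rfl

lemma distrib_le_ofReal (τ : ℝ) : distrib a f τ ≤ ENNReal.ofReal a :=
  calc distrib a f τ ≤ volume (Icc (0:ℝ) a) := measure_mono fun _ hs => hs.1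
  _ = ENNReal.ofReal a := by rw [Real.volume_Icc, sub_zero]

lemma distrib_ne_top (τ : ℝ) : distrib a f τ ≠ ⊤ :=
  ne_top_of_le_ne_top ENNReal.ofReal_ne_top (distrib_le_ofReal a f τ)

lemma toReal_distrib_le (ha : 0 ≤ a) (τ : ℝ) : (distrib a f τ).toReal ≤ a :=
  ENNReal.toReal_le_of_le_ofReal ha (distrib_le_ofReal a f τ)

lemma distrib_anti : Antitone (distrib a f) :=
  fun _ _ h => measure_mono fun _ hs => ⟨hs.1, h.trans_lt hs.2⟩

lemma distrib_eq_iSup (τ : ℝ) : distrib a f τ = ⨆ n : ℕ, distrib a f (τ + 1 / (n + 1)) := by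
  have hU : {s ∈ Icc (0:ℝ) a | τ < ‖f s‖} =
      ⋃ n : ℕ, {s ∈ Icc (0:ℝ) a | τ + 1 / (n + 1) < ‖f s‖} := by
    ext s
    simp only [mem_ofPred_eq, mem_iUnion]
    constructor
    · rintro ⟨hs, hτ⟩
      obtain ⟨n, hn⟩ := exists_nat_one_div_lt (sub_pos.2 hτ)
      exact ⟨n, hs, by linarith⟩
    · rintro ⟨n, hs, hn⟩
      exact ⟨hs, lt_of_le_of_lt (le_add_of_nonneg_right (by positivity)) hn⟩
  rw [distrib, hU]
  refine Monotone.measure_iUnion fun n m hnm => ?_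
  refine fun s hs => ⟨hs.1, lt_of_le_of_lt ?_ hs.2⟩
  gcongr

lemma distrib_neg : distrib a (fun t => -f t) = distrib a f := by
  ext1 τ
  simp [distrib]

lemma rearr_neg : rearr a (fun t => -f t) = rearr a f := by
  ext1 t
  simp only [rearr, distrib_neg]

lemma distrib_eq_zero_of_ae_norm_le {c : ℝ}
    (hf : ∀ᵐ s ∂volume.restrict (Icc 0 a), ‖f s‖ ≤ c) : distrib a f c = 0 := by
  rw [distrib_eq_restrict]
  exact measure_mono_null (fun s hs => not_le.2 hs) (ae_iff.1 hf)

lemma toReal_distrib_indicator_le {S : Set ℝ} (hS : volume S ≠ ⊤) {τ : ℝ} (hτ : 0 ≤ τ) :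
    (distrib a (S.indicator f) τ).toReal ≤ (volume S).toReal := by
  refine ENNReal.toReal_mono hS (measure_mono fun s hs => ?_)
  by_contra hsS
  have hlt := hs.2
  rw [indicator_of_notMem hsS, norm_zero] at hlt
  exact hlt.not_ge hτ

lemma rearr_nonneg (t : ℝ) : 0 ≤ rearr a f t :=
  Real.sInf_nonneg fun _ hτ => hτ.1

variable {a f} {c : ℝ}

lemma rearr_le_iff (hc : 0 ≤ c) (hfc : distrib a f c = 0) {t τ : ℝ} (hτ : 0 ≤ τ) :
    rearr a f t ≤ τ ↔ distrib a f τ ≤ ENNReal.ofReal t := by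
  have hne : {τ' : ℝ | 0 ≤ τ' ∧ distrib a f τ' ≤ ENNReal.ofReal t}.Nonempty :=
    ⟨c, hc, by rw [hfc]; exact zero_le⟩
  refine ⟨fun hle => ?_, fun hle => csInf_le ⟨0, fun _ hx => hx.1⟩ ⟨hτ, hle⟩⟩
  rw [distrib_eq_iSup a f τ]
  refine iSup_le fun n => ?_
  obtain ⟨τ', hτ'mem, hτ'lt⟩ := exists_lt_of_csInf_lt hne
    (hle.trans_lt (lt_add_of_pos_right τ (by positivity : (0:ℝ) < 1 / (n + 1))))
  exact (distrib_anti a f hτ'lt.le).trans hτ'mem.2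

lemma lt_rearr_iff (hc : 0 ≤ c) (hfc : distrib a f c = 0) {t τ : ℝ} (hτ : 0 ≤ τ) :
    τ < rearr a f t ↔ ENNReal.ofReal t < distrib a f τ := by
  rw [← not_le, ← not_le, rearr_le_iff hc hfc hτ]

lemma rearr_anti (hc : 0 ≤ c) (hfc : distrib a f c = 0) : Antitone (rearr a f) := fun _ _ h =>
  csInf_le_csInf ⟨0, fun _ hx => hx.1⟩ ⟨c, hc, by rw [hfc]; exact zero_le⟩
    fun _ hτ => ⟨hτ.1, hτ.2.trans (ENNReal.ofReal_le_ofReal h)⟩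

/-- Layer-cake formula: `{t | τ < f* t} = (0, m{‖f‖ > τ})` for `τ > 0`. -/
lemma setLIntegral_rearr (hc : 0 ≤ c) (hfc : distrib a f c = 0) {b : ℝ}
    (hDb : ∀ τ, 0 < τ → (distrib a f τ).toReal ≤ b) (μ : Measure ℝ) :
    ∫⁻ t in Ioc 0 b, ENNReal.ofReal (rearr a f t) ∂μ =
      ∫⁻ τ in Ioi 0, μ (Ioo 0 (distrib a f τ).toReal) := by
  have hmeas := (rearr_anti hc hfc).measurable
  rw [lintegral_eq_lintegral_meas_lt _ (.of_forall (rearr_nonneg a f)) hmeas.aemeasurable]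
  refine setLIntegral_congr_fun measurableSet_Ioi fun τ (hτ : 0 < τ) => ?_
  rw [Measure.restrict_apply (measurableSet_lt measurable_const hmeas)]
  congr 1
  ext t
  simp only [mem_inter_iff, mem_ofPred_eq, mem_Ioc, mem_Ioo]
  constructor
  · rintro ⟨hlt, ht0, -⟩
    rw [lt_rearr_iff hc hfc hτ.le] at hlt
    exact ⟨ht0, (ENNReal.ofReal_lt_iff_lt_toReal ht0.le (distrib_ne_top a f τ)).1 hlt⟩
  · rintro ⟨ht0, htD⟩
    refine ⟨?_, ht0, htD.le.trans (hDb τ hτ)⟩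
    rw [lt_rearr_iff hc hfc hτ.le]
    exact (ENNReal.ofReal_lt_iff_lt_toReal ht0.le (distrib_ne_top a f τ)).2 htD

end Distrib

section Stieltjes

variable {φ : ℝ → ℝ} {a : ℝ}

lemma stieltjesOfOn_apply (ha : 0 ≤ a) (hmono : MonotoneOn φ (Icc 0 a))
    (hcont : ContinuousOn φ (Icc 0 a)) (t : ℝ) :
    stieltjesOfOn φ a t = φ (clampIcc a t) := by
  rw [stieltjesOfOn, dif_pos ⟨ha, hmono, hcont⟩]

lemma stieltjesOfOn_continuous (ha : 0 ≤ a) (hmono : MonotoneOn φ (Icc 0 a))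
    (hcont : ContinuousOn φ (Icc 0 a)) :
    Continuous (stieltjesOfOn φ a) := by
  rw [show (stieltjesOfOn φ a : ℝ → ℝ) = fun t => φ (clampIcc a t) from
    funext (stieltjesOfOn_apply ha hmono hcont)]
  exact hcont.comp_continuous (clampIcc_continuous a) fun x => clampIcc_mem a x ha

lemma stieltjesOfOn_measure_Ioo (ha : 0 ≤ a) (hmono : MonotoneOn φ (Icc 0 a))
    (hcont : ContinuousOn φ (Icc 0 a)) {d : ℝ}
    (hd : d ∈ Icc 0 a) :
    (stieltjesOfOn φ a).measure (Ioo 0 d) = ENNReal.ofReal (φ d - φ 0) := by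
  have hclamp : ∀ {t}, t ∈ Icc 0 a → clampIcc a t = t := fun ht => by
    rw [clampIcc, max_eq_left ht.1, min_eq_left ht.2]
  rw [StieltjesFunction.measure_Ioo,
    (stieltjesOfOn_continuous ha hmono hcont).continuousAt.continuousWithinAt.leftLim_eq,
    stieltjesOfOn_apply ha hmono hcont, stieltjesOfOn_apply ha hmono hcont,
    hclamp hd, hclamp ⟨le_rfl, ha⟩]

lemma setLIntegral_rearr_stieltjesOfOn (ha : 0 ≤ a) (hmono : MonotoneOn φ (Icc 0 a))
    (hcont : ContinuousOn φ (Icc 0 a))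
    {E : Type*} [NormedAddCommGroup E] {f : ℝ → E} {c : ℝ}
    (hc : 0 ≤ c) (hfc : distrib a f c = 0) {b : ℝ}
    (hDb : ∀ τ, 0 < τ → (distrib a f τ).toReal ≤ b) :
    ∫⁻ t in Ioc 0 b, ENNReal.ofReal (rearr a f t) ∂(stieltjesOfOn φ a).measure =
      ∫⁻ τ in Ioi 0, ENNReal.ofReal (φ (distrib a f τ).toReal - φ 0) := by
  rw [setLIntegral_rearr hc hfc hDb]
  refine setLIntegral_congr_fun measurableSet_Ioi fun τ _ => ?_
  exact stieltjesOfOn_measure_Ioo ha hmono hcont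
    ⟨ENNReal.toReal_nonneg, toReal_distrib_le a f ha τ⟩

lemma monotoneOn_neg_comp_sub (hmono : MonotoneOn φ (Icc 0 a)) :
    MonotoneOn (fun s => -φ (a - s)) (Icc 0 a) :=
  fun x hx y hy hxy => neg_le_neg <| hmono ⟨by linarith [hy.2], by linarith [hy.1]⟩
    ⟨by linarith [hx.2], by linarith [hx.1]⟩ (by linarith)

lemma continuousOn_neg_comp_sub (hcont : ContinuousOn φ (Icc 0 a)) :
    ContinuousOn (fun s => -φ (a - s)) (Icc 0 a) :=
  (hcont.comp (continuous_const.sub continuous_id).continuousOn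
    fun x hx => ⟨by simp [hx.2], by simp [hx.1]⟩).neg

end Stieltjes

section Lebesgue

lemma ae_measure_level_set_eq_zero {α : Type*} [MeasurableSpace α] {μ : Measure α} [SFinite μ]
    {g : α → ℝ} (hg : Measurable g) : ∀ᵐ c, μ {x | g x = c} = 0 := by
  have hnull := (Measure.countable_meas_level_set_pos (μ := μ) hg).measure_zero volume
  filter_upwards [measure_eq_zero_iff_ae_notMem.1 hnull] with c hc
  simpa using hc

lemma measure_lt_add_measure_gt_eq_univ {α : Type*} [MeasurableSpace α] {μ : Measure α}
    {g : α → ℝ} (hg : Measurable g) {c : ℝ} (hc : μ {x | g x = c} = 0) :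
    μ {x | c < g x} + μ {x | g x < c} = μ univ := by
  have hlt : {x | g x < c} = {x | c < g x}ᶜ \ {x | g x = c} := by
    ext x
    simp only [Set.mem_sdiff, mem_compl_iff, mem_ofPred_eq, not_lt]
    exact lt_iff_le_and_ne
  rw [hlt, measure_sdiff_null hc,
    measure_add_measure_compl (measurableSet_lt measurable_const hg)]

lemma setLIntegral_Ioi_eq_Ioc_add_Ioi {α : Type*} [LinearOrder α] [TopologicalSpace α]
    [OrderTopology α] [MeasurableSpace α] [OpensMeasurableSpace α] {μ : Measure α}
    (F : α → ℝ≥0∞) {b c : α} (hbc : b ≤ c) :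
    ∫⁻ x in Ioi b, F x ∂μ = ∫⁻ x in Ioc b c, F x ∂μ + ∫⁻ x in Ioi c, F x ∂μ := by
  rw [← Ioc_union_Ioi_eq_Ioi hbc, lintegral_union measurableSet_Ioi (Ioc_disjoint_Ioi le_rfl)]

lemma setLIntegral_Ioi_eq_comp_add (F : ℝ → ℝ≥0∞) (c : ℝ) :
    ∫⁻ x in Ioi c, F x = ∫⁻ x in Ioi 0, F (x + c) := by
  rw [← (measurePreserving_add_right volume c).setLIntegral_comp_preimage_emb
    (MeasurableEquiv.addRight c).measurableEmbedding F (Ioi c)]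
  have hpre : (· + c) ⁻¹' Ioi c = Ioi 0 := by
    ext x
    simp
  rw [hpre]

lemma setLIntegral_Ioc_comp_sub_left (F : ℝ → ℝ≥0∞) (c : ℝ) :
    ∫⁻ x in Ioc 0 c, F (c - x) = ∫⁻ x in Ioc 0 c, F x := by
  rw [← (Measure.measurePreserving_sub_left volume c).setLIntegral_comp_preimage_emb
    (MeasurableEquiv.subLeft c).measurableEmbedding F (Ioc 0 c)]
  have hpre : (c - ·) ⁻¹' Ioc 0 c = Ico 0 c := by
    ext x
    simp only [mem_preimage, mem_Ioc, mem_Ico]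
    constructor <;> rintro ⟨h₁, h₂⟩ <;> constructor <;> linarith
  rw [hpre]
  exact setLIntegral_congr Ico_ae_eq_Ioc.symm

lemma setLIntegral_ofReal_add_ofReal_one_sub {α : Type*} [MeasurableSpace α] {μ : Measure α}
    {g : α → ℝ} (hg : Measurable g) {s : Set α} (hs : MeasurableSet s)
    (hg01 : ∀ x ∈ s, g x ∈ Icc 0 1) :
    ∫⁻ x in s, ENNReal.ofReal (g x) ∂μ + ∫⁻ x in s, ENNReal.ofReal (1 - g x) ∂μ = μ s := by
  rw [← lintegral_add_left hg.ennreal_ofReal, setLIntegral_congr_fun hs (g := fun _ => 1)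
    fun x hx => ?_, setLIntegral_const, one_mul]
  rw [← ENNReal.ofReal_add (hg01 x hx).1 (sub_nonneg.2 (hg01 x hx).2), add_sub_cancel,
    ENNReal.ofReal_one]

end Lebesgue

section OneAdd

variable {a : ℝ} {h : ℝ → ℝ}

lemma posSet_neg : posSet a (fun t => -h t) = negSet a h := by
  ext t
  simp [posSet, negSet]

lemma negSet_neg : negSet a (fun t => -h t) = posSet a h := by
  ext t
  simp [posSet, negSet]

lemma distrib_posSet_indicator {σ : ℝ} (hσ : 0 ≤ σ) :
    distrib a ((posSet a h).indicator h) σ = volume.restrict (Icc 0 a) {s | σ < h s} := by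
  rw [distrib_eq_restrict]
  refine measure_congr (eventuallyEq_set.2 ?_)
  filter_upwards [ae_restrict_mem measurableSet_Icc] with s hs
  by_cases hpos : 0 < h s
  · simp [indicator_of_mem (show s ∈ posSet a h from ⟨hs, hpos⟩), abs_of_pos hpos]
  · simp only [indicator_of_notMem (show s ∉ posSet a h from fun h' => hpos h'.2), norm_zero]
    exact iff_of_false hσ.not_gt fun h' => hpos (hσ.trans_lt h')

lemma distrib_negSet_indicator {σ : ℝ} (hσ : 0 ≤ σ) :
    distrib a ((negSet a h).indicator h) σ = volume.restrict (Icc 0 a) {s | h s < -σ} := by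
  rw [distrib_eq_restrict]
  refine measure_congr (eventuallyEq_set.2 ?_)
  filter_upwards [ae_restrict_mem measurableSet_Icc] with s hs
  by_cases hneg : h s < 0
  · simp [indicator_of_mem (show s ∈ negSet a h from ⟨hs, hneg⟩), abs_of_neg hneg, lt_neg]
  · simp only [indicator_of_notMem (show s ∉ negSet a h from fun h' => hneg h'.2), norm_zero]
    exact iff_of_false hσ.not_gt fun h' => hneg (h'.trans_le (neg_nonpos.2 hσ))

variable (hb : ∀ᵐ t ∂volume.restrict (Icc 0 a), |h t| ≤ 1)
include hb

lemma distrib_one_add (τ : ℝ) :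
    distrib a (fun t => 1 + h t) τ = volume.restrict (Icc 0 a) {s | τ < 1 + h s} := by
  rw [distrib_eq_restrict]
  refine measure_congr (eventuallyEq_set.2 ?_)
  filter_upwards [hb] with s hs
  rw [Real.norm_eq_abs, abs_of_nonneg (by linarith [neg_abs_le (h s)])]

lemma distrib_one_add_add_one {σ : ℝ} (hσ : 0 ≤ σ) :
    distrib a (fun t => 1 + h t) (σ + 1) = distrib a ((posSet a h).indicator h) σ := by
  rw [distrib_one_add hb, distrib_posSet_indicator hσ]
  simp_rw [add_comm σ 1, add_lt_add_iff_left]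

lemma toReal_distrib_one_add (ha : 0 ≤ a) (hm : Measurable h) {τ : ℝ} (hτ : τ ≤ 1)
    (hlevel : volume.restrict (Icc 0 a) {s | 1 + h s = τ} = 0) :
    (distrib a (fun t => 1 + h t) τ).toReal =
      a - (distrib a ((negSet a h).indicator h) (1 - τ)).toReal := by
  have hsum := measure_lt_add_measure_gt_eq_univ (g := fun s => 1 + h s)
    (measurable_const.add hm) hlevel
  have hneg : volume.restrict (Icc 0 a) {s | 1 + h s < τ} =
      distrib a ((negSet a h).indicator h) (1 - τ) := by
    rw [distrib_negSet_indicator (sub_nonneg.2 hτ)]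
    congr 1
    ext s
    simp only [mem_ofPred_eq]
    constructor <;> intro <;> linarith
  rw [← distrib_one_add hb, hneg, Measure.restrict_apply_univ, Real.volume_Icc, sub_zero] at hsum
  have hreal := congrArg ENNReal.toReal hsum
  rw [ENNReal.toReal_add (distrib_ne_top _ _ _) (distrib_ne_top _ _ _),
    ENNReal.toReal_ofReal ha] at hreal
  linarith

variable {φ : ℝ → ℝ}

lemma eLorentzNorm_one_add_eq (ha : 0 ≤ a) (hmono : MonotoneOn φ (Icc 0 a))
    (hcont : ContinuousOn φ (Icc 0 a)) (hφ0 : φ 0 = 0) (hm : Measurable h) :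
    eLorentzNorm φ a (fun t => 1 + h t) =
      (∫⁻ τ in Ioc 0 1,
          ENNReal.ofReal (φ (a - (distrib a ((negSet a h).indicator h) τ).toReal))) +
        ∫⁻ σ in Ioi 0, ENNReal.ofReal (φ (distrib a ((posSet a h).indicator h) σ).toReal) := by
  have hD2 : distrib a (fun t => 1 + h t) 2 = 0 := by
    refine distrib_eq_zero_of_ae_norm_le _ _ ?_
    filter_upwards [hb] with s hs
    calc ‖1 + h s‖ ≤ ‖(1:ℝ)‖ + ‖h s‖ := norm_add_le _ _
    _ ≤ 2 := by rw [norm_one, Real.norm_eq_abs]; linarith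
  rw [eLorentzNorm, setLIntegral_rearr_stieltjesOfOn ha hmono hcont zero_le_two hD2
      fun τ _ => toReal_distrib_le a _ ha τ, setLIntegral_Ioi_eq_Ioc_add_Ioi _ zero_le_one,
    setLIntegral_Ioi_eq_comp_add _ 1]
  simp_rw [hφ0, sub_zero]
  congr 1
  · refine (setLIntegral_congr_fun_ae measurableSet_Ioc ?_).trans
      (setLIntegral_Ioc_comp_sub_left
        (fun τ => ENNReal.ofReal (φ (a - (distrib a ((negSet a h).indicator h) τ).toReal))) 1)
    filter_upwards [ae_measure_level_set_eq_zero (μ := volume.restrict (Icc 0 a))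
      (measurable_const.add hm)] with τ hτ hτmem
    rw [toReal_distrib_one_add hb ha hm hτmem.2 hτ]
  · refine setLIntegral_congr_fun measurableSet_Ioi fun σ hσ => ?_
    rw [distrib_one_add_add_one hb (le_of_lt hσ)]

lemma distrib_indicator_one (S : Set ℝ) : distrib a (S.indicator h) 1 = 0 := by
  refine distrib_eq_zero_of_ae_norm_le _ _ ?_
  filter_upwards [hb] with s hs using (norm_indicator_le_norm_self h s).trans hs

lemma setLIntegral_rearr_negSet_stieltjesOfOn_reflect (ha : 0 ≤ a)
    (hmono : MonotoneOn φ (Icc 0 a)) (hcont : ContinuousOn φ (Icc 0 a)) (hφa : φ a = 1) :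
    ∫⁻ t in Ioc 0 (volume (negSet a h)).toReal,
        ENNReal.ofReal (rearr a ((negSet a h).indicator h) t)
          ∂(stieltjesOfOn (fun s => -φ (a - s)) a).measure =
      ∫⁻ τ in Ioc 0 1,
        ENNReal.ofReal (1 - φ (a - (distrib a ((negSet a h).indicator h) τ).toReal)) := by
  have hfin : volume (negSet a h) ≠ ⊤ :=
    ((measure_mono (sep_subset _ _)).trans_lt measure_Icc_lt_top).ne
  rw [setLIntegral_rearr_stieltjesOfOn ha (monotoneOn_neg_comp_sub hmono)
      (continuousOn_neg_comp_sub hcont) zero_le_one (distrib_indicator_one hb _)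
      fun τ hτ => toReal_distrib_indicator_le a h hfin hτ.le,
    setLIntegral_Ioi_eq_Ioc_add_Ioi _ zero_le_one,
    setLIntegral_congr_fun measurableSet_Ioi (g := fun _ => 0) fun τ (hτ : 1 < τ) => ?_,
    lintegral_zero, add_zero]
  · simp_rw [sub_zero, neg_sub_neg, hφa]
  · have hDn : distrib a ((negSet a h).indicator h) τ = 0 :=
      nonpos_iff_eq_zero.1 (distrib_indicator_one hb _ ▸ distrib_anti a _ hτ.le)
    simp [hDn, hφa]

lemma eLorentzNorm_one_add_add_setLIntegral_rearr_negSet (ha : 0 ≤ a)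
    (hmono : MonotoneOn φ (Icc 0 a)) (hcont : ContinuousOn φ (Icc 0 a))
    (hφ0 : φ 0 = 0) (hφa : φ a = 1) (hm : Measurable h) :
    eLorentzNorm φ a (fun t => 1 + h t) +
        (∫⁻ t in Ioc 0 (volume (negSet a h)).toReal,
          ENNReal.ofReal (rearr a ((negSet a h).indicator h) t)
            ∂(stieltjesOfOn (fun s => -φ (a - s)) a).measure) =
      1 + ∫⁻ t in Ioc 0 (volume (posSet a h)).toReal,
          ENNReal.ofReal (rearr a ((posSet a h).indicator h) t) ∂(stieltjesOfOn φ a).measure := by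
  set Dn := distrib a ((negSet a h).indicator h)
  have hmem : ∀ τ, a - (Dn τ).toReal ∈ Icc 0 a := fun τ =>
    ⟨sub_nonneg.2 (toReal_distrib_le a _ ha τ), sub_le_self _ ENNReal.toReal_nonneg⟩
  have hφDn_mono : Monotone fun τ => φ (a - (Dn τ).toReal) := fun x y hxy =>
    hmono (hmem x) (hmem y) <| sub_le_sub_left
      (ENNReal.toReal_mono (distrib_ne_top a _ x) (distrib_anti a _ hxy)) a
  have hφDn_mem : ∀ τ ∈ Ioc (0:ℝ) 1, φ (a - (Dn τ).toReal) ∈ Icc 0 1 := fun τ _ =>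
    ⟨hφ0 ▸ hmono ⟨le_rfl, ha⟩ (hmem τ) (hmem τ).1, hφa ▸ hmono (hmem τ) ⟨ha, le_rfl⟩ (hmem τ).2⟩
  have hfin : volume (posSet a h) ≠ ⊤ :=
    ((measure_mono (sep_subset _ _)).trans_lt measure_Icc_lt_top).ne
  rw [eLorentzNorm_one_add_eq hb ha hmono hcont hφ0 hm,
    setLIntegral_rearr_negSet_stieltjesOfOn_reflect hb ha hmono hcont hφa,
    setLIntegral_rearr_stieltjesOfOn ha hmono hcont zero_le_one (distrib_indicator_one hb _)
      fun τ hτ => toReal_distrib_indicator_le a h hfin hτ.le,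
    add_right_comm,
    setLIntegral_ofReal_add_ofReal_one_sub hφDn_mono.measurable measurableSet_Ioc hφDn_mem]
  simp_rw [hφ0, sub_zero, Real.volume_Ioc, sub_zero, ENNReal.ofReal_one]

end OneAdd

/-- The nonpositive integrals `∫₀^b g dφ(a−t)` of the paper equal `−∫₀^b g dψ` for the increasing
integrator `ψ(t) = −φ(a−t)`; accordingly they are moved to the left-hand sides. -/
theorem lorentz_norm_one_pm_h_general (a : ℝ) (ha : 0 < a) (φ : ℝ → ℝ)
    (hcont : ContinuousOn φ (Set.Icc 0 a))
    (hmono : MonotoneOn φ (Set.Icc 0 a))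
    (hφ0 : φ 0 = 0) (hφa : φ a = 1)
    (h : ℝ → ℝ) (hm : Measurable h)
    (hb : ∀ᵐ t ∂(volume.restrict (Set.Icc (0:ℝ) a)), |h t| ≤ 1) :
    (eLorentzNorm φ a (fun t => 1 + h t) +
        (∫⁻ t in Set.Ioc (0:ℝ) ((volume (negSet a h)).toReal),
          ENNReal.ofReal (rearr a ((negSet a h).indicator h) t)
            ∂(stieltjesOfOn (fun s => -φ (a - s)) a).measure) =
      1 + ∫⁻ t in Set.Ioc (0:ℝ) ((volume (posSet a h)).toReal),
          ENNReal.ofReal (rearr a ((posSet a h).indicator h) t)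
            ∂(stieltjesOfOn φ a).measure) ∧
    (eLorentzNorm φ a (fun t => 1 - h t) +
        (∫⁻ t in Set.Ioc (0:ℝ) ((volume (posSet a h)).toReal),
          ENNReal.ofReal (rearr a ((posSet a h).indicator h) t)
            ∂(stieltjesOfOn (fun s => -φ (a - s)) a).measure) =
      1 + ∫⁻ t in Set.Ioc (0:ℝ) ((volume (negSet a h)).toReal),
          ENNReal.ofReal (rearr a ((negSet a h).indicator h) t)
            ∂(stieltjesOfOn φ a).measure) := by
  refine ⟨eLorentzNorm_one_add_add_setLIntegral_rearr_negSet hb ha.le hmono hcont hφ0 hφa hm, ?_⟩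
  have hb_neg : ∀ᵐ t ∂(volume.restrict (Icc (0:ℝ) a)), |-h t| ≤ 1 := by simpa using hb
  simpa only [posSet_neg, negSet_neg, indicator_neg, rearr_neg, ← sub_eq_add_neg] using
    eLorentzNorm_one_add_add_setLIntegral_rearr_negSet hb_neg ha.le hmono hcont hφ0 hφa hm.neg

/-- For `φ` increasing, concave, continuous on `[0,a]`, `φ 0 = 0`,
`φ a = 1`, and measurable `h` with `|h| ≤ 1` a.e.:
`‖1 + h‖_{Λ(φ)} = 1 + ∫₀^{m E₊} (h χ_{E₊})* dφ(t) + ∫₀^{m E₋} (h χ_{E₋})* dφ(a−t)` and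
`‖1 − h‖_{Λ(φ)} = 1 + ∫₀^{m E₋} (h χ_{E₋})* dφ(t) + ∫₀^{m E₊} (h χ_{E₊})* dφ(a−t)`.
The (nonpositive) integrals `∫₀^b g dφ(a−t)` equal `−∫₀^b g dψ` for the increasing
integrator `ψ(t) = −φ(a−t)`; accordingly they are moved to the left-hand sides below. -/
theorem lorentz_norm_one_pm_h (a : ℝ) (ha : 0 < a) (φ : ℝ → ℝ)
    (hconc : ConcaveOn ℝ (Set.Icc 0 a) φ)
    (hcont : ContinuousOn φ (Set.Icc 0 a))
    (hmono : MonotoneOn φ (Set.Icc 0 a))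
    (hφ0 : φ 0 = 0) (hφa : φ a = 1)
    (h : ℝ → ℝ) (hm : Measurable h)
    (hb : ∀ᵐ t ∂(volume.restrict (Set.Icc (0:ℝ) a)), |h t| ≤ 1) :
    (eLorentzNorm φ a (fun t => 1 + h t) +
        (∫⁻ t in Set.Ioc (0:ℝ) ((volume (negSet a h)).toReal),
          ENNReal.ofReal (rearr a ((negSet a h).indicator h) t)
            ∂(stieltjesOfOn (fun s => -φ (a - s)) a).measure) =
      1 + ∫⁻ t in Set.Ioc (0:ℝ) ((volume (posSet a h)).toReal),
          ENNReal.ofReal (rearr a ((posSet a h).indicator h) t)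
            ∂(stieltjesOfOn φ a).measure) ∧
    (eLorentzNorm φ a (fun t => 1 - h t) +
        (∫⁻ t in Set.Ioc (0:ℝ) ((volume (posSet a h)).toReal),
          ENNReal.ofReal (rearr a ((posSet a h).indicator h) t)
            ∂(stieltjesOfOn (fun s => -φ (a - s)) a).measure) =
      1 + ∫⁻ t in Set.Ioc (0:ℝ) ((volume (negSet a h)).toReal),
          ENNReal.ofReal (rearr a ((negSet a h).indicator h) t)
            ∂(stieltjesOfOn φ a).measure) :=
  lorentz_norm_one_pm_h_general a ha φ hcont hmono hφ0 hφa h hm hb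

end
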